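/- arXiv:2602.21565 — 2 statements merged into one kernel-verified Lean document; each statement's English description precedes it below -/
import Mathlib

section
/- Let $(S, A)$ be a finite directed acyclic graph with a unique initial state $s_0$. For each $i \in \{1,\dots,k\}$, let $p_{i,F}$ be a forward policy and $u_i : S \to \mathbb{R}_{\ge 0}$ satisfy the reaching-probability recursion: $u_i(s_0) = 1$ and $u_i(s) = \sum_{s_* : (s_* \to s) \in A} u_i(s_*)\, p_{i,F}(s \mid s_*)$ for all $s \ne s_0$. Let $v_1,\dots,v_k \ge 0$ with $\sum_i v_i = 1$, define $u_M(s) := \sum_i v_i u_i(s)$, and assume $u_M(s) > 0$ on all relevant states. Define the mixing policy $p_{M,F}(s' \mid s) := \sum_{i=1}^k \frac{v_i u_i(s)}{u_M(s)} p_{i,F}(s' \mid s)$. Then $u_M$ satisfies the same recursion under $p_{M,F}$: $u_M(s_0) = 1$ and $u_M(s) = \sum_{s_* : (s_* \to s) \in A} u_M(s_*)\, p_{M,F}(s \mid s_*)$ for all $s \ne s_0$. -/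
open Finset

theorem mul_sum_div_mul {ι K : Type*} [Field K] (s : Finset ι) {c : K} (hc : c ≠ 0)
    (a b : ι → K) : c * ∑ i ∈ s, a i / c * b i = ∑ i ∈ s, a i * b i := by
  rw [mul_sum]
  exact sum_congr rfl fun i _ => by field_simp

theorem sum_mul_eq_sum_sum_of_eq_sum {ι σ R : Type*} [CommSemiring R] (t : Finset ι)
    (P : Finset σ) (v x : ι → R) (f : ι → σ → R) (hx : ∀ i ∈ t, x i = ∑ p ∈ P, f i p) :
    ∑ i ∈ t, v i * x i = ∑ p ∈ P, ∑ i ∈ t, v i * f i p := by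
  rw [sum_comm]
  exact sum_congr rfl fun i hi => by rw [hx i hi, mul_sum]

theorem mixed_reaching_probability_recursion_general
    {S : Type*} [Fintype S] [DecidableEq S]
    (A : S → S → Prop) [DecidableRel A] (s0 : S)
    (k : ℕ) (pF : Fin k → S → S → ℝ) (u : Fin k → S → ℝ)
    (hu_init : ∀ i, u i s0 = 1)
    (hu_rec : ∀ i, ∀ s, s ≠ s0 →
      u i s = ∑ sp ∈ Finset.univ.filter (fun sp => A sp s), u i sp * pF i sp s)
    (v : Fin k → ℝ) (hv_sum : ∑ i, v i = 1)
    (uM : S → ℝ) (huM : ∀ s, uM s = ∑ i, v i * u i s)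
    (huM_pos : ∀ s, 0 < uM s)
    (pMF : S → S → ℝ)
    (hpMF : ∀ s s', pMF s s' = ∑ i, (v i * u i s / uM s) * pF i s s') :
    uM s0 = 1 ∧ ∀ s, s ≠ s0 →
      uM s = ∑ sp ∈ Finset.univ.filter (fun sp => A sp s), uM sp * pMF sp s := by
  refine ⟨by simp [huM, hu_init, hv_sum], fun s hs => ?_⟩
  have edge_flow : ∀ sp, uM sp * pMF sp s = ∑ i, v i * (u i sp * pF i sp s) := fun sp => by
    simp_rw [hpMF, mul_sum_div_mul _ (huM_pos sp).ne', mul_assoc]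
  simp_rw [edge_flow, huM]
  exact sum_mul_eq_sum_sum_of_eq_sum _ _ _ _ _ fun i _ => hu_rec i s hs

/-- The mixed reaching probability `u_M = ∑ i, v i * u i` satisfies the
reaching-probability recursion under the mixing policy. -/
theorem mixed_reaching_probability_recursion
    {S : Type*} [Fintype S] [DecidableEq S]
    (A : S → S → Prop) [DecidableRel A] (s0 : S)
    (k : ℕ) (pF : Fin k → S → S → ℝ) (u : Fin k → S → ℝ)
    (hu_nonneg : ∀ i s, 0 ≤ u i s)
    (hu_init : ∀ i, u i s0 = 1)
    (hu_rec : ∀ i, ∀ s, s ≠ s0 →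
      u i s = ∑ sp ∈ Finset.univ.filter (fun sp => A sp s), u i sp * pF i sp s)
    (v : Fin k → ℝ) (hv_nonneg : ∀ i, 0 ≤ v i) (hv_sum : ∑ i, v i = 1)
    (uM : S → ℝ) (huM : ∀ s, uM s = ∑ i, v i * u i s)
    (huM_pos : ∀ s, 0 < uM s)
    (pMF : S → S → ℝ)
    (hpMF : ∀ s s', pMF s s' = ∑ i, (v i * u i s / uM s) * pF i s s') :
    uM s0 = 1 ∧ ∀ s, s ≠ s0 →
      uM s = ∑ sp ∈ Finset.univ.filter (fun sp => A sp s), uM sp * pMF sp s :=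
  mixed_reaching_probability_recursion_general A s0 k pF u hu_init hu_rec v hv_sum uM huM huM_pos
    pMF hpMF
end

section
/- Let $(S,A)$ be a finite DAG with source $s_0$ and sink $s_f$, and suppose forward policies $p_{1,F},\dots,p_{k,F}$ with reaching probabilities $u_1,\dots,u_k$ and convex weights $v_1,\dots,v_k$ ($v_i \ge 0$, $\sum v_i = 1$, $u_M := \sum_i v_i u_i > 0$ on relevant states). Let $p_{M,F}(s'\mid s) = \sum_i \frac{v_i u_i(s)}{u_M(s)} p_{i,F}(s'\mid s)$ be the mixing policy and let $p_M(x)$ be its induced terminating-state distribution. If each component's terminating-state distribution $p_i$ satisfies $p_i(x) = u_i(x) p_{i,F}(s_f \mid x)$ and $u_M$ is the reaching probability of $p_{M,F}$, then for every terminating state $x$: $p_M(x) = u_M(x)\, p_{M,F}(s_f \mid x) = \sum_{i=1}^k v_i u_i(x)\, p_{i,F}(s_f \mid x) = \sum_{i=1}^k v_i p_i(x)$. -/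
open Finset

def mixingPolicy {ι S K : Type*} [Fintype ι] [Field K]
    (v : ι → K) (u : ι → S → K) (uM : S → K) (pF : ι → S → S → K) (s s' : S) : K :=
  ∑ i, (v i * u i s / uM s) * pF i s s'

theorem mul_mixingPolicy {ι S K : Type*} [Fintype ι] [Field K]
    (v : ι → K) (u : ι → S → K) (uM : S → K) (pF : ι → S → S → K) {s : S} (hs : uM s ≠ 0)
    (s' : S) :
    uM s * mixingPolicy v u uM pF s s' = ∑ i, v i * (u i s * pF i s s') := by
  rw [mixingPolicy, mul_sum]
  refine sum_congr rfl fun i _ => ?_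
  field_simp

theorem mixing_policy_terminating_distribution_general
    {S : Type*}
    (sf : S)
    (k : ℕ) (pF : Fin k → S → S → ℝ) (u : Fin k → S → ℝ)
    (v : Fin k → ℝ)
    (uM : S → ℝ)
    (huM_pos : ∀ s, 0 < uM s)
    (pMF : S → S → ℝ)
    (hpMF : ∀ s s', pMF s s' = ∑ i, (v i * u i s / uM s) * pF i s s')
    (p : Fin k → S → ℝ) (hp : ∀ i x, p i x = u i x * pF i x sf)
    (pM : S → ℝ) (hpM : ∀ x, pM x = uM x * pMF x sf) :
    ∀ x, pM x = uM x * pMF x sf ∧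
      pM x = ∑ i, v i * (u i x * pF i x sf) ∧
      pM x = ∑ i, v i * p i x := by
  intro x
  have hmix : pM x = ∑ i, v i * (u i x * pF i x sf) := by
    rw [hpM, hpMF, ← mixingPolicy, mul_mixingPolicy v u uM pF (huM_pos x).ne']
  exact ⟨hpM x, hmix, by simpa only [hp] using hmix⟩

/-- Full correctness of the mixing policy: the induced terminating-state
distribution equals the `v`-weighted mixture of the component terminating
distributions. -/
theorem mixing_policy_terminating_distribution
    {S : Type*} [Fintype S] [DecidableEq S]
    (A : S → S → Prop) (s0 sf : S)
    (k : ℕ) (pF : Fin k → S → S → ℝ) (u : Fin k → S → ℝ)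
    (hu_nonneg : ∀ i s, 0 ≤ u i s)
    (v : Fin k → ℝ) (hv_nonneg : ∀ i, 0 ≤ v i) (hv_sum : ∑ i, v i = 1)
    (uM : S → ℝ) (huM : ∀ s, uM s = ∑ i, v i * u i s)
    (huM_pos : ∀ s, 0 < uM s)
    (pMF : S → S → ℝ)
    (hpMF : ∀ s s', pMF s s' = ∑ i, (v i * u i s / uM s) * pF i s s')
    (p : Fin k → S → ℝ) (hp : ∀ i x, p i x = u i x * pF i x sf)
    (pM : S → ℝ) (hpM : ∀ x, pM x = uM x * pMF x sf) :
    ∀ x, pM x = uM x * pMF x sf ∧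
      pM x = ∑ i, v i * (u i x * pF i x sf) ∧
      pM x = ∑ i, v i * p i x :=
  mixing_policy_terminating_distribution_general sf k pF u v uM huM_pos pMF hpMF p hp pM hpM
end
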